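/- Formulas of the guarded fragment are invariant under guarded bisimulation: let Σ be a relational signature, φ(x₁,…,xₙ) a formula of the guarded fragment of first-order logic over Σ with free variables among x₁,…,xₙ, and let 𝔄 and 𝔅 be Σ-structures with guarded tuples ā = (a₁,…,aₙ) and b̄ = (b₁,…,bₙ) such that 𝔄,ā ∼_g 𝔅,b̄. Then 𝔄 ⊨ φ(a₁,…,aₙ) if and only if 𝔅 ⊨ φ(b₁,…,bₙ). -/

import Mathlib

open FirstOrder

namespace GFPaper

variable {L : FirstOrder.Language} {M N : Type*} {K V : Type*}

/-! ### Guarded sets, guarded tuples, partial isomorphisms, guarded bisimulations -/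

/-- A guarded set of a `Σ`-structure is a nonempty (finite) subset contained in the set of
components of some tuple belonging to some relation of the structure. -/
def IsGuardedSet (SM : L.Structure M) (B : Set M) : Prop :=
  B.Nonempty ∧ ∃ (n : ℕ) (R : L.Relations n) (a : Fin n → M),
    SM.RelMap R a ∧ B ⊆ Set.range a

/-- A guarded tuple is a tuple of pairwise distinct elements whose set of components is
a guarded set. -/
def IsGuardedTuple (SM : L.Structure M) {k : ℕ} (a : Fin k → M) : Prop :=
  Function.Injective a ∧ IsGuardedSet SM (Set.range a)

/-- A partial isomorphism between two `Σ`-structures: an injective map between finite subsets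
preserving and reflecting all atomic relations.  The function `toFun` is total, but only its
restriction to `dom` is meaningful. -/
structure PartialIso (SM : L.Structure M) (SN : L.Structure N) where
  dom : Set M
  finite_dom : dom.Finite
  toFun : M → N
  injOn : Set.InjOn toFun dom
  rel_iff : ∀ {n : ℕ} (R : L.Relations n) (a : Fin n → M), (∀ i, a i ∈ dom) →
    (SM.RelMap R a ↔ SN.RelMap R (fun i => toFun (a i)))

/-- The range of a partial isomorphism. -/
def PartialIso.rng {SM : L.Structure M} {SN : L.Structure N} (α : PartialIso SM SN) : Set N :=
  α.toFun '' α.dom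

/-- A guarded bisimulation between two `Σ`-structures: a nonempty family of partial
isomorphisms between finite subsets satisfying the back-and-forth conditions over guarded
sets. -/
structure GuardedBisim (SM : L.Structure M) (SN : L.Structure N) where
  Z : Set (PartialIso SM SN)
  nonempty : Z.Nonempty
  forth : ∀ α ∈ Z, ∀ B₀ : Set M, IsGuardedSet SM B₀ →
    ∃ γ ∈ Z, B₀ ⊆ γ.dom ∧ ∀ x ∈ α.dom ∩ γ.dom, α.toFun x = γ.toFun x
  back : ∀ α ∈ Z, ∀ B₁ : Set N, IsGuardedSet SN B₁ →
    ∃ γ ∈ Z, B₁ ⊆ γ.rng ∧ ∀ x ∈ α.dom, ∀ y ∈ γ.dom, α.toFun x = γ.toFun y → x = y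

/-- `𝔄₀,ā ∼_g 𝔄₁,b̄` : some guarded bisimulation contains the map `ā ↦ b̄`. -/
def GBisimTuple (SM : L.Structure M) (SN : L.Structure N) {k : ℕ}
    (a : Fin k → M) (b : Fin k → N) : Prop :=
  ∃ (Z : GuardedBisim SM SN) (α : PartialIso SM SN), α ∈ Z.Z ∧
    α.dom = Set.range a ∧ ∀ i, α.toFun (a i) = b i

/-- Guarded bisimilarity has finite index on the guarded tuples of a structure:
there is a finite set of guarded tuples such that every guarded tuple is guarded bisimilar
to one of them. -/
def FiniteGBisimIndex (SM : L.Structure M) : Prop :=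
  ∃ S : Set (Σ k : ℕ, Fin k → M), S.Finite ∧
    ∀ ⦃k : ℕ⦄ (a : Fin k → M), IsGuardedTuple SM a →
      ∃ b : Fin k → M, (⟨k, b⟩ : Σ k : ℕ, Fin k → M) ∈ S ∧
        IsGuardedTuple SM b ∧ GBisimTuple SM SM a b

/-! ### Undirected unraveling and undirected bisimulation -/

/-- `t` extends `s` by one edge (i.e. `s` is obtained from `t` by deleting its last node). -/
def ExtendsBy (G : SimpleGraph V) (v₀ : V) (s t : Σ u : V, G.Walk v₀ u) : Prop :=
  ∃ h : G.Adj s.1 t.1, t.2 = s.2.concat h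

/-- The undirected unraveling of a graph `G` from a node `v₀`: nodes are the finite walks
of `G` starting at `v₀`, and edges join each walk of positive length to the walk obtained
by deleting its last node. -/
def unraveling (G : SimpleGraph V) (v₀ : V) : SimpleGraph (Σ u : V, G.Walk v₀ u) where
  Adj s t := ExtendsBy G v₀ s t ∨ ExtendsBy G v₀ t s
  symm := ⟨fun _ _ h => Or.symm h⟩
  loopless := ⟨fun s h => by
    rcases h with ⟨h, _⟩ | ⟨h, _⟩ <;> exact G.loopless.irrefl s.1 h⟩

/-- The projection sending a node of the unraveling (a walk) to its terminal node. -/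
def unravelingProj (G : SimpleGraph V) (v₀ : V) : (Σ u : V, G.Walk v₀ u) → V :=
  fun s => s.1

/-- An undirected bisimulation between node-labelled undirected graphs. -/
def IsUndirectedBisim {V₀ V₁ Λ : Type*} (G₀ : SimpleGraph V₀) (G₁ : SimpleGraph V₁)
    (ℓ₀ : V₀ → Λ) (ℓ₁ : V₁ → Λ) (Z : Set (V₀ × V₁)) : Prop :=
  ∀ p ∈ Z, ℓ₀ p.1 = ℓ₁ p.2 ∧
    (∀ w₀, G₀.Adj p.1 w₀ → ∃ w₁, G₁.Adj p.2 w₁ ∧ (w₀, w₁) ∈ Z) ∧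
    (∀ w₁, G₁.Adj p.2 w₁ → ∃ w₀, G₀.Adj p.1 w₀ ∧ (w₀, w₁) ∈ Z)

/-! ### Tabloids -/

/-- A tabloid over a relational signature `L` and a set `K` of constant names: an undirected
graph where every node `v` carries a set `consts v ⊆ K` of constants and an atomic type
over `consts v`, encoded as the collection `rel v` of atomic facts over `consts v`; the
types of adjacent nodes agree over their common constants. -/
structure Tabloid (L : FirstOrder.Language) (K : Type*) (V : Type*) where
  graph : SimpleGraph V
  consts : V → Set K
  rel : ∀ (_v : V) {n : ℕ}, L.Relations n → (Fin n → K) → Prop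
  rel_mem : ∀ (v : V) {n : ℕ} (R : L.Relations n) (c : Fin n → K),
    rel v R c → ∀ i, c i ∈ consts v
  compat : ∀ (v w : V), graph.Adj v w → ∀ {n : ℕ} (R : L.Relations n) (c : Fin n → K),
    (∀ i, c i ∈ consts v ∩ consts w) → (rel v R c ↔ rel w R c)

namespace Tabloid

variable (T : Tabloid L K V)

/-- The pairs `(v, c)` with `v` a node and `c` one of its constants. -/
def Pairs : Type _ := {q : V × K // q.2 ∈ T.consts q.1}

/-- The relation `(v,c) ≈ (v',c')` iff `c = c'` and `c` belongs to the constants of every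
node on the (unique, when the tabloid is a tree) path connecting `v` and `v'`. -/
def keq (p q : T.Pairs) : Prop :=
  p.1.2 = q.1.2 ∧
    ∀ w : T.graph.Walk p.1.1 q.1.1, w.IsPath → ∀ z ∈ w.support, p.1.2 ∈ T.consts z

/-- The set of nodes `v` witnessing simultaneously the classes `[v_i, c_i]`, i.e. such that
`c_i ∈ K_v` and `[v, c_i] = [v_i, c_i]` for all `i`. -/
def classSet {n : ℕ} (p : Fin n → T.Pairs) : Set V :=
  {v | ∀ i, ∃ h : (p i).1.2 ∈ T.consts v,
    Quot.mk T.keq ⟨((v, (p i).1.2) : V × K), h⟩ = Quot.mk T.keq (p i)}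

/-- The structure `𝔄(T)` associated to a (tree) tabloid: the universe is the set of
`≈`-classes `[v,c]`, and a tuple satisfies a relation iff some single node witnesses all
classes and its atomic type contains the corresponding fact. -/
def AT [L.IsRelational] : L.Structure (Quot T.keq) where
  funMap := fun f _ => isEmptyElim f
  RelMap := fun {n} R x =>
    ∃ (v : V) (c : Fin n → K) (h : ∀ i, c i ∈ T.consts v),
      (∀ i, Quot.mk T.keq ⟨((v, c i) : V × K), h i⟩ = x i) ∧ T.rel v R c

/-- The undirected unraveling of a tabloid from a node: the unraveling of the underlying
graph, each walk carrying the labels of its terminal node. -/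
def unravel (v₀ : V) : Tabloid L K (Σ u : V, T.graph.Walk v₀ u) where
  graph := unraveling T.graph v₀
  consts := fun s => T.consts s.1
  rel := fun s => T.rel s.1
  rel_mem := fun s _ R c h i => T.rel_mem s.1 R c h i
  compat := by
    rintro s t hst n R c hc
    rcases (show ExtendsBy T.graph v₀ s t ∨ ExtendsBy T.graph v₀ t s from hst) with ⟨h, _⟩ | ⟨h, _⟩
    · exact T.compat s.1 t.1 h R c hc
    · exact (T.compat t.1 s.1 h R c (fun i => ⟨(hc i).2, (hc i).1⟩)).symm

/-- An isomorphism of a tabloid onto itself: a graph automorphism preserving both labels. -/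
structure Auto where
  toEquiv : V ≃ V
  adj_iff : ∀ z z', T.graph.Adj z z' ↔ T.graph.Adj (toEquiv z) (toEquiv z')
  consts_eq : ∀ z, T.consts (toEquiv z) = T.consts z
  rel_iff : ∀ (z : V) {n : ℕ} (R : L.Relations n) (c : Fin n → K),
    T.rel (toEquiv z) R c ↔ T.rel z R c

end Tabloid

/-! ### The tabloid built from a finite model -/

/-- `χ` is the graph of a function. -/
def IsFunGraph (χ : Set (M × K)) : Prop :=
  ∀ ⦃a b b'⦄, (a, b) ∈ χ → (a, b') ∈ χ → b = b'

/-- `χ` is the graph of an injective (partial) function. -/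
def IsInjGraph (χ : Set (M × K)) : Prop :=
  ∀ ⦃a a' b⦄, (a, b) ∈ χ → (a', b) ∈ χ → a = a'

/-- The vertices of the tabloid built from a structure: injections `χ : A → K` with `A`
a guarded set, encoded via their graphs. -/
def ChiVertex (SM : L.Structure M) (K : Type*) : Type _ :=
  {χ : Set (M × K) // IsFunGraph χ ∧ IsInjGraph χ ∧ IsGuardedSet SM {a | ∃ b, (a, b) ∈ χ}}

/-- The constants of the vertex `χ`: the range of `χ`. -/
def chiConsts {SM : L.Structure M} (χ : ChiVertex SM K) : Set K :=
  {b | ∃ a, (a, b) ∈ χ.1}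

/-- The atomic type of the vertex `χ`: the image under `χ` of the atomic type of its
domain in the structure. -/
def chiRel {SM : L.Structure M} (χ : ChiVertex SM K) {n : ℕ}
    (R : L.Relations n) (c : Fin n → K) : Prop :=
  ∃ a : Fin n → M, (∀ i, (a i, c i) ∈ χ.1) ∧ SM.RelMap R a

/-- Adjacency of vertices: `χ ∪ χ'` is an injective function (and `χ ≠ χ'`). -/
def chiAdj {SM : L.Structure M} (χ χ' : ChiVertex SM K) : Prop :=
  χ ≠ χ' ∧ IsFunGraph (χ.1 ∪ χ'.1) ∧ IsInjGraph (χ.1 ∪ χ'.1)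

/-! ### The guarded fragment of first-order logic -/

/-- Formulas of the guarded fragment of first-order logic over a relational signature `L`,
with variables drawn from `ℕ`: atomic formulas (including equalities), Boolean connectives,
and guarded quantification `∃ȳ (R(x̄ȳ) ∧ φ)` and `∀ȳ (R(x̄ȳ) → φ)`. -/
inductive GFormula (L : FirstOrder.Language) : Type _ where
  | equal : ℕ → ℕ → GFormula L
  | rel : ∀ {n : ℕ}, L.Relations n → (Fin n → ℕ) → GFormula L
  | not : GFormula L → GFormula L
  | and : GFormula L → GFormula L → GFormula L
  | or : GFormula L → GFormula L → GFormula L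
  | exGuard : ∀ {n : ℕ}, L.Relations n → (Fin n → ℕ) → Set ℕ → GFormula L → GFormula L
  | allGuard : ∀ {n : ℕ}, L.Relations n → (Fin n → ℕ) → Set ℕ → GFormula L → GFormula L

namespace GFormula

/-- The free variables of a formula. -/
def free : GFormula L → Set ℕ
  | equal i j => {i, j}
  | rel _ ts => Set.range ts
  | not φ => φ.free
  | and φ ψ => φ.free ∪ ψ.free
  | or φ ψ => φ.free ∪ ψ.free
  | exGuard _ ts ys φ => (Set.range ts ∪ φ.free) \ ys
  | allGuard _ ts ys φ => (Set.range ts ∪ φ.free) \ ys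

/-- Well-formedness for the guarded fragment: in every guarded quantification
`∃ȳ (R(x̄ȳ) ∧ φ)` resp. `∀ȳ (R(x̄ȳ) → φ)` the guard atom contains all free variables
of `φ` as well as all quantified variables. -/
def IsGF : GFormula L → Prop
  | equal _ _ => True
  | rel _ _ => True
  | not φ => φ.IsGF
  | and φ ψ => φ.IsGF ∧ ψ.IsGF
  | or φ ψ => φ.IsGF ∧ ψ.IsGF
  | exGuard _ ts ys φ => φ.free ⊆ Set.range ts ∧ ys ⊆ Set.range ts ∧ φ.IsGF
  | allGuard _ ts ys φ => φ.free ⊆ Set.range ts ∧ ys ⊆ Set.range ts ∧ φ.IsGF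

/-- Satisfaction of a guarded formula in a structure under a variable assignment. -/
def Sat (SM : L.Structure M) : GFormula L → (ℕ → M) → Prop
  | equal i j, β => β i = β j
  | rel R ts, β => SM.RelMap R (fun i => β (ts i))
  | not φ, β => ¬ Sat SM φ β
  | and φ ψ, β => Sat SM φ β ∧ Sat SM ψ β
  | or φ ψ, β => Sat SM φ β ∨ Sat SM ψ β
  | exGuard R ts ys φ, β => ∃ β' : ℕ → M, (∀ x ∉ ys, β' x = β x) ∧
      SM.RelMap R (fun i => β' (ts i)) ∧ Sat SM φ β'
  | allGuard R ts ys φ, β => ∀ β' : ℕ → M, (∀ x ∉ ys, β' x = β x) →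
      SM.RelMap R (fun i => β' (ts i)) → Sat SM φ β'

/-- Every subformula of `φ` has at most `n` free variables. -/
def WidthLE (n : ℕ) : GFormula L → Prop
  | equal i j => (({i, j} : Set ℕ)).ncard ≤ n
  | rel _ ts => (Set.range ts).ncard ≤ n
  | not φ => φ.WidthLE n
  | and φ ψ => (φ.free ∪ ψ.free).ncard ≤ n ∧ φ.WidthLE n ∧ ψ.WidthLE n
  | or φ ψ => (φ.free ∪ ψ.free).ncard ≤ n ∧ φ.WidthLE n ∧ ψ.WidthLE n
  | exGuard _ ts _ φ => (Set.range ts ∪ φ.free).ncard ≤ n ∧ φ.WidthLE n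
  | allGuard _ ts _ φ => (Set.range ts ∪ φ.free).ncard ≤ n ∧ φ.WidthLE n

end GFormula

/-! Induction on the formula, carrying a partial isomorphism `α` of the bisimulation that maps
the current assignment in `𝔄` to the one in `𝔅` on the free variables. Atoms transfer because
`α` is a partial isomorphism. At a guarded quantifier the values of the guard form a guarded
set, so the forth (resp. back) condition extends `α` to some `γ` covering the new witnesses
while agreeing with `α` on the variables that stay fixed; this gives the corresponding
witness on the other side, and `γ` is the partial isomorphism for the subformula. -/

namespace PartialIso

variable {SM : L.Structure M} {SN : L.Structure N}

def Matches (α : PartialIso SM SN) (β : ℕ → M) (β' : ℕ → N) (S : Set ℕ) : Prop :=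
  ∀ x ∈ S, β x ∈ α.dom ∧ β' x = α.toFun (β x)

variable {α : PartialIso SM SN} {β : ℕ → M} {β' : ℕ → N}

theorem Matches.mono {S T : Set ℕ} (h : α.Matches β β' T) (hST : S ⊆ T) :
    α.Matches β β' S :=
  fun x hx => h x (hST hx)

theorem Matches.relMap_iff {n : ℕ} {R : L.Relations n} {ts : Fin n → ℕ}
    (h : α.Matches β β' (Set.range ts)) :
    SM.RelMap R (fun i => β (ts i)) ↔ SN.RelMap R (fun i => β' (ts i)) := by
  have hβ' : (fun i => β' (ts i)) = fun i => α.toFun (β (ts i)) :=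
    funext fun i => (h (ts i) ⟨i, rfl⟩).2
  rw [hβ']
  exact α.rel_iff R _ fun i => (h (ts i) ⟨i, rfl⟩).1

end PartialIso

namespace GuardedBisim

variable {SM : L.Structure M} {SN : L.Structure N} (Z : GuardedBisim SM SN)
  {α : PartialIso SM SN} {β : ℕ → M} {β' : ℕ → N} {n : ℕ} {R : L.Relations n}
  {ts : Fin n → ℕ} {ys : Set ℕ}

theorem exists_matches_forth (hα : α ∈ Z.Z) (h : α.Matches β β' (Set.range ts \ ys))
    {β₀ : ℕ → M} (hβ₀ : ∀ x ∉ ys, β₀ x = β x) (hR : SM.RelMap R (fun i => β₀ (ts i))) :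
    ∃ γ ∈ Z.Z, ∃ β₀' : ℕ → N, (∀ x ∉ ys, β₀' x = β' x) ∧ γ.Matches β₀ β₀' (Set.range ts) := by
  classical
  rcases isEmpty_or_nonempty (Fin n) with hn | hn
  · exact ⟨α, hα, β', fun _ _ => rfl, fun x ⟨i, _⟩ => isEmptyElim i⟩
  have hguard : IsGuardedSet SM (Set.range fun i => β₀ (ts i)) :=
    ⟨Set.range_nonempty _, n, R, _, hR, subset_rfl⟩
  obtain ⟨γ, hγ, hsub, hagree⟩ := Z.forth α hα _ hguard
  have hdom : ∀ x ∈ Set.range ts, β₀ x ∈ γ.dom := by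
    rintro x ⟨i, rfl⟩
    exact hsub ⟨i, rfl⟩
  refine ⟨γ, hγ, (Set.range ts).piecewise (fun x => γ.toFun (β₀ x)) β', fun x hx => ?_,
    fun x hx => ⟨hdom x hx, Set.piecewise_eq_of_mem _ _ _ hx⟩⟩
  by_cases hxt : x ∈ Set.range ts
  · obtain ⟨hxα, hxβ'⟩ := h x ⟨hxt, hx⟩
    rw [Set.piecewise_eq_of_mem _ _ _ hxt, hxβ', hβ₀ x hx]
    exact (hagree (β x) ⟨hxα, hβ₀ x hx ▸ hdom x hxt⟩).symm
  · exact Set.piecewise_eq_of_notMem _ _ _ hxt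

theorem exists_matches_back (hα : α ∈ Z.Z) (h : α.Matches β β' (Set.range ts \ ys))
    {β₀' : ℕ → N} (hβ₀' : ∀ x ∉ ys, β₀' x = β' x) (hR : SN.RelMap R (fun i => β₀' (ts i))) :
    ∃ γ ∈ Z.Z, ∃ β₀ : ℕ → M, (∀ x ∉ ys, β₀ x = β x) ∧ γ.Matches β₀ β₀' (Set.range ts) := by
  classical
  rcases isEmpty_or_nonempty (Fin n) with hn | hn
  · exact ⟨α, hα, β, fun _ _ => rfl, fun x ⟨i, _⟩ => isEmptyElim i⟩
  have hguard : IsGuardedSet SN (Set.range fun i => β₀' (ts i)) :=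
    ⟨Set.range_nonempty _, n, R, _, hR, subset_rfl⟩
  obtain ⟨γ, hγ, hsub, hinj⟩ := Z.back α hα _ hguard
  have hpre : ∀ x ∈ Set.range ts, ∃ y ∈ γ.dom, γ.toFun y = β₀' x := by
    rintro x ⟨i, rfl⟩
    exact hsub ⟨i, rfl⟩
  have : Nonempty M := ⟨β 0⟩
  choose! pre hpre_dom hpre_eq using hpre
  refine ⟨γ, hγ, (Set.range ts).piecewise pre β, fun x hx => ?_, fun x hx => ?_⟩
  · by_cases hxt : x ∈ Set.range ts
    · obtain ⟨hxα, hxβ'⟩ := h x ⟨hxt, hx⟩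
      rw [Set.piecewise_eq_of_mem _ _ _ hxt]
      refine (hinj (β x) hxα _ (hpre_dom x hxt) ?_).symm
      rw [hpre_eq x hxt, hβ₀' x hx, hxβ']
    · exact Set.piecewise_eq_of_notMem _ _ _ hxt
  · rw [Set.piecewise_eq_of_mem _ _ _ hx]
    exact ⟨hpre_dom x hx, (hpre_eq x hx).symm⟩

theorem sat_iff_of_matches {φ : GFormula L} (hφ : φ.IsGF) (hα : α ∈ Z.Z)
    (h : α.Matches β β' φ.free) : GFormula.Sat SM φ β ↔ GFormula.Sat SN φ β' := by
  induction φ generalizing α β β' with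
  | equal i j =>
    obtain ⟨hi, hβ'i⟩ := h i (Or.inl rfl)
    obtain ⟨hj, hβ'j⟩ := h j (Or.inr rfl)
    simp only [GFormula.Sat, hβ'i, hβ'j]
    exact (α.injOn.eq_iff hi hj).symm
  | rel R ts => exact h.relMap_iff
  | not φ ih => exact not_congr (ih hφ hα h)
  | and φ ψ ihφ ihψ =>
    exact and_congr (ihφ hφ.1 hα (h.mono Set.subset_union_left))
      (ihψ hφ.2 hα (h.mono Set.subset_union_right))
  | or φ ψ ihφ ihψ =>
    exact or_congr (ihφ hφ.1 hα (h.mono Set.subset_union_left))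
      (ihψ hφ.2 hα (h.mono Set.subset_union_right))
  | exGuard R ts ys φ ih =>
    obtain ⟨hfree, -, hφ⟩ := hφ
    have hguard := h.mono (Set.sdiff_subset_sdiff_left Set.subset_union_left)
    constructor
    · rintro ⟨β₀, hβ₀, hR, hsat⟩
      obtain ⟨γ, hγ, β₀', hβ₀', hm⟩ := Z.exists_matches_forth hα hguard hβ₀ hR
      exact ⟨β₀', hβ₀', hm.relMap_iff.mp hR, (ih hφ hγ (hm.mono hfree)).mp hsat⟩
    · rintro ⟨β₀', hβ₀', hR, hsat⟩
      obtain ⟨γ, hγ, β₀, hβ₀, hm⟩ := Z.exists_matches_back hα hguard hβ₀' hR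
      exact ⟨β₀, hβ₀, hm.relMap_iff.mpr hR, (ih hφ hγ (hm.mono hfree)).mpr hsat⟩
  | allGuard R ts ys φ ih =>
    obtain ⟨hfree, -, hφ⟩ := hφ
    have hguard := h.mono (Set.sdiff_subset_sdiff_left Set.subset_union_left)
    constructor
    · intro hsat β₀' hβ₀' hR
      obtain ⟨γ, hγ, β₀, hβ₀, hm⟩ := Z.exists_matches_back hα hguard hβ₀' hR
      exact (ih hφ hγ (hm.mono hfree)).mp (hsat β₀ hβ₀ (hm.relMap_iff.mpr hR))
    · intro hsat β₀ hβ₀ hR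
      obtain ⟨γ, hγ, β₀', hβ₀', hm⟩ := Z.exists_matches_forth hα hguard hβ₀ hR
      exact (ih hφ hγ (hm.mono hfree)).mpr (hsat β₀' hβ₀' (hm.relMap_iff.mp hR))

end GuardedBisim

theorem gf_invariant_under_gbisim_general {L : FirstOrder.Language}
    {M N : Type*} (SM : L.Structure M) (SN : L.Structure N)
    (φ : GFormula L) (hφ : φ.IsGF) (n : ℕ) (hfree : ∀ x ∈ φ.free, x < n)
    (a : Fin n → M) (b : Fin n → N)
    (hab : GBisimTuple SM SN a b)
    (β : ℕ → M) (β' : ℕ → N)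
    (hβ : ∀ i : Fin n, β i.1 = a i) (hβ' : ∀ i : Fin n, β' i.1 = b i) :
    GFormula.Sat SM φ β ↔ GFormula.Sat SN φ β' := by
  obtain ⟨Z, α, hα, hdom, hαab⟩ := hab
  refine Z.sat_iff_of_matches hφ hα fun x hx => ?_
  let i : Fin n := ⟨x, hfree x hx⟩
  have hβi : β x = a i := hβ i
  rw [hβi, hβ' i, hαab i, hdom]
  exact ⟨⟨i, rfl⟩, rfl⟩

/-- Formulas of the guarded fragment are invariant under guarded
bisimulation: if `𝔄,ā ∼_g 𝔅,b̄` for guarded tuples `ā`, `b̄`, then for every guarded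
formula `φ(x₁,…,xₙ)`, `𝔄 ⊨ φ(ā)` iff `𝔅 ⊨ φ(b̄)`. -/
theorem gf_invariant_under_gbisim {L : FirstOrder.Language} [L.IsRelational]
    {M N : Type*} (SM : L.Structure M) (SN : L.Structure N)
    (φ : GFormula L) (hφ : φ.IsGF) (n : ℕ) (hfree : ∀ x ∈ φ.free, x < n)
    (a : Fin n → M) (b : Fin n → N)
    (ha : IsGuardedTuple SM a) (hb : IsGuardedTuple SN b)
    (hab : GBisimTuple SM SN a b)
    (β : ℕ → M) (β' : ℕ → N)
    (hβ : ∀ i : Fin n, β i.1 = a i) (hβ' : ∀ i : Fin n, β' i.1 = b i) :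
    GFormula.Sat SM φ β ↔ GFormula.Sat SN φ β' :=
  gf_invariant_under_gbisim_general SM SN φ hφ n hfree a b hab β β' hβ hβ'

end GFPaper
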